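/- Given Christoffel symbols H¹₁₁(t) of a Riemannian metric on ℝ and γ^i_{jk}(x) of a Riemannian metric on M, the pair M̊^{(j)}_{(1)1} = −H¹₁₁ x₁^j and N̊^{(j)}_{(1)i} = γ^j_{im} x₁^m satisfies the transformation laws of a nonlinear connection on J¹(ℝ,M). -/

import Mathlib

noncomputable section

/-- Partial derivative of `f` with respect to the `j`-th coordinate at `x`. -/
def pd {n : ℕ} (f : (Fin n → ℝ) → ℝ) (x : Fin n → ℝ) (j : Fin n) : ℝ :=
  deriv (fun s => f (Function.update x j s)) (x j)

/-- Jacobian `∂x̃^k/∂x^j` of the spatial change of coordinates `φ` (with `x̃ = φ x`). -/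
def Jac {n : ℕ} (φ : (Fin n → ℝ) → (Fin n → ℝ)) (x : Fin n → ℝ) (k j : Fin n) : ℝ :=
  pd (fun y => φ y k) x j

/-- `dt/dt̃`, expressed at the old time `t` (with `t̃ = a t`). -/
def dtdT (a : ℝ → ℝ) (t : ℝ) : ℝ := (deriv a t)⁻¹

/-- The induced fibre coordinate `x̃₁^k = (∂x̃^k/∂x^j)(dt/dt̃) x₁^j`. -/
def fib {n : ℕ} (a : ℝ → ℝ) (φ : (Fin n → ℝ) → (Fin n → ℝ))
    (t : ℝ) (x v : Fin n → ℝ) (k : Fin n) : ℝ :=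
  (∑ j, Jac φ x k j * v j) * dtdT a t

/-- A (global) smooth diffeomorphic change of coordinates `t̃ = a t`, `x̃ = φ x`,
with inverse maps `b` and `ψ`. -/
def IsCoordChange (n : ℕ) (a b : ℝ → ℝ) (φ ψ : (Fin n → ℝ) → (Fin n → ℝ)) : Prop :=
  ContDiff ℝ (⊤ : ℕ∞) a ∧ ContDiff ℝ (⊤ : ℕ∞) b ∧ (∀ t, b (a t) = t) ∧ (∀ s, a (b s) = s) ∧
    (∀ t, deriv a t ≠ 0) ∧ ContDiff ℝ (⊤ : ℕ∞) φ ∧ ContDiff ℝ (⊤ : ℕ∞) ψ ∧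
    (∀ x, ψ (φ x) = x) ∧ (∀ y, φ (ψ y) = y)

/-- Smoothness of a local object on the 1-jet space. -/
def SmoothJet {n : ℕ} (G : ℝ → (Fin n → ℝ) → (Fin n → ℝ) → Fin n → ℝ) : Prop :=
  ContDiff ℝ (⊤ : ℕ∞) (fun p : ℝ × (Fin n → ℝ) × (Fin n → ℝ) => G p.1 p.2.1 p.2.2)

/-- The common transformation law of temporal semisprays (`c = 2`) and of the
temporal components of nonlinear connections (`c = 1`):
`c·H̃^{(k)} = c·H^{(j)} (dt/dt̃)² ∂x̃^k/∂x^j − (dt/dt̃) ∂x̃₁^k/∂t`. -/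
def TemporalLaw {n : ℕ} (a : ℝ → ℝ) (φ : (Fin n → ℝ) → (Fin n → ℝ)) (c : ℝ)
    (H Ht : ℝ → (Fin n → ℝ) → (Fin n → ℝ) → Fin n → ℝ) : Prop :=
  ∀ t x v k, c * Ht (a t) (φ x) (fib a φ t x v) k =
    c * (∑ j, H t x v j * (dtdT a t) ^ 2 * Jac φ x k j)
      - dtdT a t * deriv (fun s => fib a φ s x v k) t

/-- The spatial semispray transformation law:
`2G̃^{(k)} = 2G^{(j)} (dt/dt̃)² ∂x̃^k/∂x^j − (∂x^m/∂x̃^j)(∂x̃₁^k/∂x^m) x̃₁^j`. -/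
def SpatialSemisprayLaw {n : ℕ} (a : ℝ → ℝ) (φ ψ : (Fin n → ℝ) → (Fin n → ℝ))
    (G Gt : ℝ → (Fin n → ℝ) → (Fin n → ℝ) → Fin n → ℝ) : Prop :=
  ∀ t x v k, 2 * Gt (a t) (φ x) (fib a φ t x v) k =
    2 * (∑ j, G t x v j * (dtdT a t) ^ 2 * Jac φ x k j)
      - ∑ j, ∑ m, Jac ψ (φ x) m j * pd (fun y => fib a φ t y v k) x m
          * fib a φ t x v j

/-- The transformation law of the spatial components of a nonlinear connection:
`Ñ^{(k)}_{(1)l} = N^{(j)}_{(1)i} (dt/dt̃)(∂x^i/∂x̃^l)(∂x̃^k/∂x^j) − (∂x^m/∂x̃^l)(∂x̃₁^k/∂x^m)`. -/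
def SpatialConnLaw {n : ℕ} (a : ℝ → ℝ) (φ ψ : (Fin n → ℝ) → (Fin n → ℝ))
    (N Nt : ℝ → (Fin n → ℝ) → (Fin n → ℝ) → Fin n → Fin n → ℝ) : Prop :=
  ∀ t x v k l, Nt (a t) (φ x) (fib a φ t x v) k l =
    (∑ j, ∑ i, N t x v j i * dtdT a t * Jac ψ (φ x) i l * Jac φ x k j)
      - ∑ m, Jac ψ (φ x) m l * pd (fun y => fib a φ t y v k) x m

/-- The SODE transformation law:
`F̃^{(r)} = F^{(j)} (dt/dt̃)² ∂x̃^r/∂x^j − (dt/dt̃) ∂x̃₁^r/∂t − (∂x^m/∂x̃^j)(∂x̃₁^r/∂x^m) x̃₁^j`. -/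
def SODELaw {n : ℕ} (a : ℝ → ℝ) (φ ψ : (Fin n → ℝ) → (Fin n → ℝ))
    (F Ft : ℝ → (Fin n → ℝ) → (Fin n → ℝ) → Fin n → ℝ) : Prop :=
  ∀ t x v k, Ft (a t) (φ x) (fib a φ t x v) k =
    (∑ j, F t x v j * (dtdT a t) ^ 2 * Jac φ x k j)
      - dtdT a t * deriv (fun s => fib a φ s x v k) t
      - ∑ j, ∑ m, Jac ψ (φ x) m j * pd (fun y => fib a φ t y v k) x m
          * fib a φ t x v j

/-- The transformation law of the temporal Christoffel symbol:
`H̃¹₁₁ = H¹₁₁ (dt/dt̃) + (dt̃/dt)(d²t/dt̃²)`. -/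
def TemporalChristoffelLaw (a b H Ht : ℝ → ℝ) : Prop :=
  ∀ t, Ht (a t) = H t * dtdT a t + deriv a t * deriv (deriv b) (a t)

namespace NLC

variable {n : ℕ}

def ee (j : Fin n) : Fin n → ℝ := Pi.single j 1

@[simp] lemma ee_apply (j i : Fin n) : ee j i = if i = j then 1 else 0 := by
  simp [ee, Pi.single_apply]

lemma hasDerivAt_update (x : Fin n → ℝ) (j : Fin n) (s : ℝ) :
    HasDerivAt (fun s : ℝ => Function.update x j s) (ee j) s := by
  have h : (fun s : ℝ => Function.update x j s)
      = fun s : ℝ => x + (s - x j) • ee j := by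
    funext s
    funext i
    rcases eq_or_ne i j with h | h
    · subst h; simp [ee]
    · simp [Function.update_of_ne h, h]
  rw [h]
  have h1 : HasDerivAt (fun s : ℝ => (s - x j)) 1 s := (hasDerivAt_id s).sub_const _
  simpa using (h1.smul_const (ee j)).const_add x

lemma pd_eq_fderiv {f : (Fin n → ℝ) → ℝ} {x : Fin n → ℝ} (hf : DifferentiableAt ℝ f x)
    (j : Fin n) : pd f x j = fderiv ℝ f x (ee j) := by
  have h2 : HasFDerivAt f (fderiv ℝ f x) (Function.update x j (x j)) := by
    rw [Function.update_eq_self]; exact hf.hasFDerivAt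
  exact (h2.comp_hasDerivAt (x j) (hasDerivAt_update x j (x j))).deriv

lemma sum_single_apply (L : (Fin n → ℝ) →L[ℝ] ℝ) (w : Fin n → ℝ) :
    L w = ∑ j, w j * L (ee j) := by
  have hw : w = ∑ j, w j • (ee j) := by
    funext i
    rw [Finset.sum_apply]
    simp
  conv_lhs => rw [hw]
  rw [map_sum]
  simp [smul_eq_mul]

lemma contDiff_proj {φ : (Fin n → ℝ) → (Fin n → ℝ)} (hφ : ContDiff ℝ (⊤ : ℕ∞) φ) (k : Fin n) :
    ContDiff ℝ (⊤ : ℕ∞) (fun y => φ y k) :=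
  (ContinuousLinearMap.proj k : ((Fin n → ℝ) →L[ℝ] ℝ)).contDiff.comp hφ

lemma pd_fun_eq {f : (Fin n → ℝ) → ℝ} (hf : ContDiff ℝ (⊤ : ℕ∞) f) (j : Fin n) :
    (fun y => pd f y j) = fun y => fderiv ℝ f y (ee j) := by
  funext y; exact pd_eq_fderiv (hf.differentiable (by simp) y) j

lemma contDiff_pd {f : (Fin n → ℝ) → ℝ} (hf : ContDiff ℝ (⊤ : ℕ∞) f) (j : Fin n) :
    ContDiff ℝ (⊤ : ℕ∞) (fun y => pd f y j) := by
  rw [pd_fun_eq hf j]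
  exact (hf.fderiv_right (by simp)).clm_apply contDiff_const

lemma contDiff_Jac {φ : (Fin n → ℝ) → (Fin n → ℝ)} (hφ : ContDiff ℝ (⊤ : ℕ∞) φ) (k j : Fin n) :
    ContDiff ℝ (⊤ : ℕ∞) (fun x => Jac φ x k j) :=
  contDiff_pd (contDiff_proj hφ k) j

lemma pd_sum {ι : Type*} [Fintype ι] {F : ι → (Fin n → ℝ) → ℝ} {x : Fin n → ℝ}
    (hF : ∀ i, DifferentiableAt ℝ (F i) x) (j : Fin n) :
    pd (fun y => ∑ i, F i y) x j = ∑ i, pd (F i) x j := by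
  rw [pd_eq_fderiv (DifferentiableAt.fun_sum fun i _ => hF i) j,
    fderiv_fun_sum (fun i _ => hF i)]
  simp only [ContinuousLinearMap.coe_sum', Finset.sum_apply]
  exact Finset.sum_congr rfl fun i _ => (pd_eq_fderiv (hF i) j).symm

lemma pd_mul {f g : (Fin n → ℝ) → ℝ} {x : Fin n → ℝ}
    (hf : DifferentiableAt ℝ f x) (hg : DifferentiableAt ℝ g x) (j : Fin n) :
    pd (fun y => f y * g y) x j = pd f x j * g x + f x * pd g x j := by
  rw [pd_eq_fderiv (hf.fun_mul hg) j, fderiv_fun_mul hf hg, pd_eq_fderiv hf j, pd_eq_fderiv hg j]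
  simp only [ContinuousLinearMap.add_apply, ContinuousLinearMap.smul_apply, smul_eq_mul]
  ring

lemma Jac_fderiv {φ : (Fin n → ℝ) → (Fin n → ℝ)} (hφ : ContDiff ℝ (⊤ : ℕ∞) φ) (x : Fin n → ℝ)
    (p r : Fin n) : Jac φ x p r = fderiv ℝ φ x (ee r) p := by
  have hφx : DifferentiableAt ℝ φ x := hφ.differentiable (by simp) x
  have h : HasFDerivAt (fun y => φ y p)
      ((ContinuousLinearMap.proj p : ((Fin n → ℝ) →L[ℝ] ℝ)).comp (fderiv ℝ φ x)) x :=
    ((ContinuousLinearMap.proj p : ((Fin n → ℝ) →L[ℝ] ℝ)).hasFDerivAt.comp x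
      hφx.hasFDerivAt : HasFDerivAt (fun y => (ContinuousLinearMap.proj p) (φ y)) _ x)
  show pd (fun y => φ y p) x r = _
  rw [pd_eq_fderiv h.differentiableAt r, h.fderiv]
  rfl

lemma pd_comp {f : (Fin n → ℝ) → ℝ} {φ : (Fin n → ℝ) → (Fin n → ℝ)}
    (hf : ContDiff ℝ (⊤ : ℕ∞) f) (hφ : ContDiff ℝ (⊤ : ℕ∞) φ) (x : Fin n → ℝ) (r : Fin n) :
    pd (fun y => f (φ y)) x r = ∑ p, pd f (φ x) p * Jac φ x p r := by
  have hfx : DifferentiableAt ℝ f (φ x) := hf.differentiable (by simp) (φ x)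
  have hφx : DifferentiableAt ℝ φ x := hφ.differentiable (by simp) x
  have hc : DifferentiableAt ℝ (fun y => f (φ y)) x := hfx.comp x hφx
  rw [pd_eq_fderiv hc r]
  have hcomp : fderiv ℝ (fun y => f (φ y)) x = (fderiv ℝ f (φ x)).comp (fderiv ℝ φ x) := by
    have := fderiv_comp x hfx hφx
    simpa [Function.comp_def] using this
  rw [hcomp, ContinuousLinearMap.comp_apply, sum_single_apply]
  refine Finset.sum_congr rfl fun p _ => ?_
  rw [Jac_fderiv hφ x p r, pd_eq_fderiv hfx p]
  ring

lemma pd_proj (x : Fin n → ℝ) (i j : Fin n) : pd (fun y => y i) x j = if i = j then 1 else 0 := by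
  unfold pd
  rcases eq_or_ne i j with h | h
  · subst h
    simp
  · simp [Function.update_of_ne h, h]

lemma pd_pd_symm {f : (Fin n → ℝ) → ℝ} (hf : ContDiff ℝ (⊤ : ℕ∞) f) (x : Fin n → ℝ) (q r : Fin n) :
    pd (fun y => pd f y q) x r = pd (fun y => pd f y r) x q := by
  have hD : ContDiff ℝ (⊤ : ℕ∞) (fderiv ℝ f) := hf.fderiv_right (by simp)
  have h2 : ∀ q r : Fin n, pd (fun y => pd f y q) x r
      = fderiv ℝ (fderiv ℝ f) x (ee r) (ee q) := by
    intro q r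
    rw [pd_fun_eq hf q]
    have hx : DifferentiableAt ℝ (fderiv ℝ f) x := hD.differentiable (by simp) x
    have hd : DifferentiableAt ℝ (fun y => fderiv ℝ f y (ee q)) x :=
      hx.clm_apply (differentiableAt_const _)
    rw [pd_eq_fderiv hd r, fderiv_clm_apply hx (differentiableAt_const _)]
    simp
  rw [h2 q r, h2 r q]
  exact (hf.contDiffAt.isSymmSndFDerivAt (by simp only [minSmoothness_of_isRCLikeNormedField]; exact WithTop.coe_le_coe.mpr (le_top : (2 : ℕ∞) ≤ ⊤))).eq _ _


variable {φ ψ : (Fin n → ℝ) → (Fin n → ℝ)}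

lemma pd_const (c : ℝ) (x : Fin n → ℝ) (j : Fin n) : pd (fun _ => c) x j = 0 := by
  unfold pd; simp

lemma pd_mul_const {f : (Fin n → ℝ) → ℝ} {x : Fin n → ℝ}
    (hf : DifferentiableAt ℝ f x) (c : ℝ) (j : Fin n) :
    pd (fun y => f y * c) x j = pd f x j * c := by
  rw [pd_mul hf (differentiableAt_const c) j, pd_const]
  ring

lemma Jac_inv (hφ : ContDiff ℝ (⊤ : ℕ∞) φ) (hψ : ContDiff ℝ (⊤ : ℕ∞) ψ) (hψφ : ∀ x, ψ (φ x) = x)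
    (x : Fin n → ℝ) (i j : Fin n) :
    ∑ m, Jac ψ (φ x) i m * Jac φ x m j = if i = j then 1 else 0 := by
  have h := pd_comp (f := fun w => ψ w i) (contDiff_proj hψ i) hφ x j
  have h2 : (fun y => ψ (φ y) i) = fun y => y i := by
    funext y; rw [hψφ y]
  rw [h2, pd_proj] at h
  exact h.symm

lemma Jac_inv' (hφ : ContDiff ℝ (⊤ : ℕ∞) φ) (hψ : ContDiff ℝ (⊤ : ℕ∞) ψ) (hψφ : ∀ x, ψ (φ x) = x)
    (hφψ : ∀ y, φ (ψ y) = y) (x : Fin n → ℝ) (i j : Fin n) :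
    ∑ m, Jac φ x i m * Jac ψ (φ x) m j = if i = j then 1 else 0 := by
  have h := Jac_inv hψ hφ hφψ (φ x) i j
  rw [hψφ x] at h
  exact h

lemma E1 (hφ : ContDiff ℝ (⊤ : ℕ∞) φ) (hψ : ContDiff ℝ (⊤ : ℕ∞) ψ) (hψφ : ∀ x, ψ (φ x) = x)
    (x : Fin n → ℝ) (i j r : Fin n) :
    ∑ m, ((∑ p, pd (fun z => pd (fun w => ψ w i) z m) (φ x) p * Jac φ x p r) * Jac φ x m j
      + Jac ψ (φ x) i m * pd (fun y => Jac φ y m j) x r) = 0 := by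
  have hd1 : ∀ m, DifferentiableAt ℝ (fun y => Jac ψ (φ y) i m) x := fun m =>
    (((contDiff_Jac hψ i m).comp hφ).differentiable (by simp)) x
  have hd2 : ∀ m, DifferentiableAt ℝ (fun y => Jac φ y m j) x := fun m =>
    ((contDiff_Jac hφ m j).differentiable (by simp)) x
  have hps := pd_sum (F := fun m y => Jac ψ (φ y) i m * Jac φ y m j) (x := x)
    (fun m => (hd1 m).mul (hd2 m)) r
  have hconst : (fun y => ∑ m, Jac ψ (φ y) i m * Jac φ y m j)
      = fun _ => (if i = j then (1:ℝ) else 0) := funext fun y => Jac_inv hφ hψ hψφ y i j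
  have h0 : ∑ m, pd (fun y => Jac ψ (φ y) i m * Jac φ y m j) x r = 0 := by
    rw [← hps, hconst, pd_const]
  have hm : ∀ m, pd (fun y => Jac ψ (φ y) i m * Jac φ y m j) x r
      = (∑ p, pd (fun z => Jac ψ z i m) (φ x) p * Jac φ x p r) * Jac φ x m j
        + Jac ψ (φ x) i m * pd (fun y => Jac φ y m j) x r := by
    intro m
    rw [pd_mul (hd1 m) (hd2 m) r,
      pd_comp (f := fun z => Jac ψ z i m) (contDiff_Jac hψ i m) hφ x r]
  exact (Finset.sum_congr rfl fun m _ => (hm m).symm).trans h0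


lemma sum_rot3 (f : Fin n → Fin n → Fin n → ℝ) :
    ∑ a, ∑ b, ∑ c, f a b c = ∑ c, ∑ a, ∑ b, f a b c := by
  calc ∑ a, ∑ b, ∑ c, f a b c = ∑ a, ∑ c, ∑ b, f a b c :=
        Finset.sum_congr rfl fun a _ => Finset.sum_comm
    _ = ∑ c, ∑ a, ∑ b, f a b c := Finset.sum_comm

lemma sum_rot4 (f : Fin n → Fin n → Fin n → Fin n → ℝ) :
    ∑ a, ∑ b, ∑ c, ∑ d, f a b c d = ∑ d, ∑ a, ∑ b, ∑ c, f a b c d := by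
  calc ∑ a, ∑ b, ∑ c, ∑ d, f a b c d = ∑ a, ∑ d, ∑ b, ∑ c, f a b c d :=
        Finset.sum_congr rfl fun a _ => sum_rot3 _
    _ = ∑ d, ∑ a, ∑ b, ∑ c, f a b c d := Finset.sum_comm

lemma spatial_algebra (A B : Fin n → Fin n → ℝ) (Ψ Φ : Fin n → Fin n → Fin n → ℝ)
    (γx γtφ : Fin n → Fin n → Fin n → ℝ) (v : Fin n → ℝ) (T : ℝ) (k l : Fin n)
    (hBA : ∀ i j, ∑ m, B i m * A m j = if i = j then 1 else 0)
    (hAB : ∀ i j, ∑ m, A i m * B m j = if i = j then 1 else 0)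
    (hSym : ∀ i q r, Ψ i q r = Ψ i r q)
    (hE1 : ∀ i j r, ∑ m, ((∑ p, Ψ i m p * A p r) * A m j + B i m * Φ m r j) = 0)
    (hrule : ∀ p q r, γtφ p q r = (∑ i, ∑ j, ∑ kk, γx i j kk * A p i * B j q * B kk r)
        + ∑ ll, A p ll * Ψ ll q r) :
    ∑ m, γtφ k l m * ((∑ j, A m j * v j) * T) =
      (∑ j, ∑ i, (∑ m, γx j i m * v m) * T * B i l * A k j)
        - ∑ m, B m l * ((∑ j, Φ k m j * v j) * T) := by
  -- contraction of B with the fibre coordinate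
  have hC1 : ∀ p, ∑ m, B p m * ((∑ j, A m j * v j) * T) = v p * T := by
    intro p
    calc ∑ m, B p m * ((∑ j, A m j * v j) * T)
        = ∑ m, ∑ j, B p m * A m j * (v j * T) := by
          refine Finset.sum_congr rfl fun m _ => ?_
          simp only [Finset.sum_mul, Finset.mul_sum]
          exact Finset.sum_congr rfl fun j _ => by ring
      _ = ∑ j, (∑ m, B p m * A m j) * (v j * T) := by
          rw [Finset.sum_comm]
          exact Finset.sum_congr rfl fun j _ => (Finset.sum_mul _ _ _).symm
      _ = ∑ j, (if p = j then 1 else 0) * (v j * T) :=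
          Finset.sum_congr rfl fun j _ => by rw [hBA p j]
      _ = v p * T := by simp
  -- the key second-derivative contraction
  have hK : ∀ q j', ∑ m, Ψ q l m * A m j'
      = -∑ r, B r l * ∑ m, B q m * Φ m r j' := by
    intro q j'
    have hE1' : ∀ r, ∑ m, (∑ p, Ψ q m p * A p r) * A m j'
        = -∑ m, B q m * Φ m r j' := by
      intro r
      have h := hE1 q j' r
      rw [Finset.sum_add_distrib] at h
      linarith
    calc ∑ m, Ψ q l m * A m j'
        = ∑ m, (∑ p, Ψ q m p * (if p = l then 1 else 0)) * A m j' := by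
          refine Finset.sum_congr rfl fun m _ => ?_
          congr 1
          rw [hSym q l m]
          simp
      _ = ∑ m, (∑ p, Ψ q m p * (∑ r, A p r * B r l)) * A m j' := by
          refine Finset.sum_congr rfl fun m _ => ?_
          congr 1
          exact Finset.sum_congr rfl fun p _ => by rw [hAB p l]
      _ = ∑ m, ∑ p, ∑ r, Ψ q m p * A p r * (B r l * A m j') := by
          refine Finset.sum_congr rfl fun m _ => ?_
          simp only [Finset.mul_sum, Finset.sum_mul]
          exact Finset.sum_congr rfl fun p _ => Finset.sum_congr rfl fun r _ => by ring
      _ = ∑ r, ∑ m, ∑ p, Ψ q m p * A p r * (B r l * A m j') := sum_rot3 _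
      _ = ∑ r, B r l * (∑ m, (∑ p, Ψ q m p * A p r) * A m j') := by
          refine Finset.sum_congr rfl fun r _ => ?_
          rw [Finset.mul_sum]
          refine Finset.sum_congr rfl fun m _ => ?_
          rw [Finset.sum_mul, Finset.mul_sum]
          exact Finset.sum_congr rfl fun p _ => by ring
      _ = ∑ r, B r l * -∑ m, B q m * Φ m r j' :=
          Finset.sum_congr rfl fun r _ => by rw [hE1' r]
      _ = -∑ r, B r l * ∑ m, B q m * Φ m r j' := by
          simp only [mul_neg]
          exact Finset.sum_neg_distrib (f := fun r => B r l * ∑ m, B q m * Φ m r j')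
  -- split via the transformation rule for γ̃
  have hsplit : ∑ m, γtφ k l m * ((∑ j, A m j * v j) * T)
      = ∑ m, ((∑ i, ∑ j, ∑ kk, γx i j kk * A k i * B j l * B kk m) * ((∑ j, A m j * v j) * T))
        + ∑ m, ((∑ q, A k q * Ψ q l m) * ((∑ j, A m j * v j) * T)) := by
    rw [← Finset.sum_add_distrib]
    refine Finset.sum_congr rfl fun m _ => ?_
    rw [hrule k l m, add_mul]
  have hfac : ∀ (c d : ℝ) (g : Fin n → ℝ), ∑ m, c * g m * d = c * (∑ m, g m) * d := by
    intro c d g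
    rw [Finset.mul_sum, Finset.sum_mul]
  have hpull : ∀ (c e : ℝ) (g : Fin n → ℝ), c * (∑ m, g m) * e = ∑ m, c * g m * e := by
    intro c e g
    rw [Finset.mul_sum, Finset.sum_mul]
  -- step A : the γ-part
  have hA1 : ∑ m, ((∑ i, ∑ j, ∑ kk, γx i j kk * A k i * B j l * B kk m) * ((∑ j, A m j * v j) * T))
      = ∑ j, ∑ i, (∑ m, γx j i m * v m) * T * B i l * A k j := by
    calc ∑ m, ((∑ i, ∑ j, ∑ kk, γx i j kk * A k i * B j l * B kk m) * ((∑ j, A m j * v j) * T))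
        = ∑ m, ∑ i, ∑ j, ∑ kk, γx i j kk * A k i * B j l *
            (B kk m * ((∑ j', A m j' * v j') * T)) := by
          refine Finset.sum_congr rfl fun m _ => ?_
          simp only [Finset.sum_mul]
          refine Finset.sum_congr rfl fun i _ => Finset.sum_congr rfl fun j _ =>
            Finset.sum_congr rfl fun kk _ => by ring
      _ = ∑ i, ∑ j, ∑ kk, ∑ m, γx i j kk * A k i * B j l *
            (B kk m * ((∑ j', A m j' * v j') * T)) := (sum_rot4 _).symm
      _ = ∑ i, ∑ j, ∑ kk, γx i j kk * A k i * B j l * (v kk * T) := by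
          refine Finset.sum_congr rfl fun i _ => Finset.sum_congr rfl fun j _ =>
            Finset.sum_congr rfl fun kk _ => ?_
          rw [← Finset.mul_sum, hC1 kk]
      _ = ∑ j, ∑ i, (∑ m, γx j i m * v m) * T * B i l * A k j := by
          refine Finset.sum_congr rfl fun i _ => Finset.sum_congr rfl fun j _ => ?_
          have h : (∑ m, γx i j m * v m) * T * B j l * A k i
              = ∑ m, γx i j m * v m * T * B j l * A k i := by
            rw [Finset.sum_mul, Finset.sum_mul, Finset.sum_mul]
          rw [h]
          exact Finset.sum_congr rfl fun kk _ => by ring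
  -- step B : the Ψ-part
  have hB1 : ∑ m, ((∑ q, A k q * Ψ q l m) * ((∑ j, A m j * v j) * T))
      = -∑ m, B m l * ((∑ j, Φ k m j * v j) * T) := by
    calc ∑ m, ((∑ q, A k q * Ψ q l m) * ((∑ j, A m j * v j) * T))
        = ∑ m, ∑ q, ∑ j', A k q * (Ψ q l m * A m j') * (v j' * T) := by
          refine Finset.sum_congr rfl fun m _ => ?_
          simp only [Finset.sum_mul, Finset.mul_sum]
          rw [Finset.sum_comm]
          exact Finset.sum_congr rfl fun q _ => Finset.sum_congr rfl fun j' _ => by ring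
      _ = ∑ q, ∑ j', ∑ m, A k q * (Ψ q l m * A m j') * (v j' * T) := (sum_rot3 _).symm
      _ = ∑ q, ∑ j', A k q * (∑ m, Ψ q l m * A m j') * (v j' * T) := by
          refine Finset.sum_congr rfl fun q _ => Finset.sum_congr rfl fun j' _ => ?_
          rw [← hfac (A k q) (v j' * T) (fun m => Ψ q l m * A m j')]
      _ = ∑ q, ∑ j', A k q * (-∑ r, B r l * ∑ m, B q m * Φ m r j') * (v j' * T) := by
          refine Finset.sum_congr rfl fun q _ => Finset.sum_congr rfl fun j' _ => ?_
          rw [hK q j']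
      _ = -∑ q, ∑ j', ∑ r, ∑ m, A k q * (B q m * Φ m r j') * (B r l * (v j' * T)) := by
          simp only [mul_neg, neg_mul, Finset.sum_neg_distrib]
          congr 1
          refine Finset.sum_congr rfl fun q _ => Finset.sum_congr rfl fun j' _ => ?_
          rw [hpull]
          refine Finset.sum_congr rfl fun r _ => ?_
          rw [Finset.mul_sum, hpull]
          exact Finset.sum_congr rfl fun m _ => by ring
      _ = -∑ j', ∑ r, ∑ m, ∑ q, A k q * (B q m * Φ m r j') * (B r l * (v j' * T)) := by
          rw [sum_rot4 (fun j' r m q => A k q * (B q m * Φ m r j') * (B r l * (v j' * T)))]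
      _ = -∑ j', ∑ r, ∑ m, (∑ q, A k q * B q m) * (Φ m r j' * (B r l * (v j' * T))) := by
          congr 1
          refine Finset.sum_congr rfl fun j' _ => Finset.sum_congr rfl fun r _ =>
            Finset.sum_congr rfl fun m _ => ?_
          rw [Finset.sum_mul]
          exact Finset.sum_congr rfl fun q _ => by ring
      _ = -∑ j', ∑ r, ∑ m, (if k = m then 1 else 0) * (Φ m r j' * (B r l * (v j' * T))) := by
          congr 1
          refine Finset.sum_congr rfl fun j' _ => Finset.sum_congr rfl fun r _ =>
            Finset.sum_congr rfl fun m _ => ?_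
          rw [hAB k m]
      _ = -∑ j', ∑ r, Φ k r j' * (B r l * (v j' * T)) := by
          congr 1
          refine Finset.sum_congr rfl fun j' _ => Finset.sum_congr rfl fun r _ => ?_
          simp
      _ = -∑ m, B m l * ((∑ j, Φ k m j * v j) * T) := by
          congr 1
          rw [Finset.sum_comm]
          refine Finset.sum_congr rfl fun r _ => ?_
          rw [Finset.sum_mul, Finset.mul_sum]
          exact Finset.sum_congr rfl fun j' _ => by ring
  rw [hsplit, hA1, hB1]
  ring

end NLC

/-- The pair `M̊^{(j)}_{(1)1} = −H¹₁₁ x₁^j`, `N̊^{(j)}_{(1)i} = γ^j_{im} x₁^m` built from the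
temporal and spatial Christoffel symbols satisfies the transformation laws of a
nonlinear connection on `J¹(ℝ,M)`. -/
theorem canonical_nonlinear_connection {n : ℕ}
    (a b : ℝ → ℝ) (φ ψ : (Fin n → ℝ) → (Fin n → ℝ))
    (hcc : IsCoordChange n a b φ ψ)
    (H Ht : ℝ → ℝ) (hH : ContDiff ℝ (⊤ : ℕ∞) H)
    (hHrule : TemporalChristoffelLaw a b H Ht)
    (γ γt : (Fin n → ℝ) → Fin n → Fin n → Fin n → ℝ)
    (hγ : ∀ i j k, ContDiff ℝ (⊤ : ℕ∞) (fun x => γ x i j k))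
    (hrule : ∀ x p q r, γt (φ x) p q r =
        (∑ i, ∑ j, ∑ k, γ x i j k * Jac φ x p i * Jac ψ (φ x) j q * Jac ψ (φ x) k r)
          + ∑ l, Jac φ x p l * pd (fun z => pd (fun w => ψ w l) z q) (φ x) r) :
    TemporalLaw a φ 1
      (fun t _ v j => -(H t) * v j)
      (fun s _ v j => -(Ht s) * v j) ∧
    SpatialConnLaw a φ ψ
      (fun _ x v j i => ∑ m, γ x j i m * v m)
      (fun _ y w j i => ∑ m, γt y j i m * w m) := by
  obtain ⟨ha, hb, hba, hab, ha', hφ, hψ, hψφ, hφψ⟩ := hcc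
  have hda : ContDiff ℝ (⊤ : ℕ∞) (deriv a) := by
    have h : deriv a = fun t => fderiv ℝ a t 1 := rfl
    rw [h]; exact (ha.fderiv_right (by simp)).clm_apply contDiff_const
  have hdb : ContDiff ℝ (⊤ : ℕ∞) (deriv b) := by
    have h : deriv b = fun t => fderiv ℝ b t 1 := rfl
    rw [h]; exact (hb.fderiv_right (by simp)).clm_apply contDiff_const
  have hinv : ∀ s, HasDerivAt (fun u => (deriv a u)⁻¹)
      (-(deriv (deriv a) s) / (deriv a s)^2) s := fun s =>
    ((hda.differentiable (by simp) s).hasDerivAt).inv (ha' s)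
  have h1 : ∀ s, deriv b (a s) = (deriv a s)⁻¹ := by
    intro s
    have hc : HasDerivAt (fun u => b (a u)) (deriv b (a s) * deriv a s) s :=
      ((hb.differentiable (by simp) (a s)).hasDerivAt).comp s
        ((ha.differentiable (by simp) s).hasDerivAt)
    have h2 : (fun u => b (a u)) = fun u => u := funext hba
    rw [h2] at hc
    exact eq_inv_of_mul_eq_one_left (hc.unique (hasDerivAt_id s))
  have hb'' : ∀ t, deriv (deriv b) (a t) = -(deriv (deriv a) t) / (deriv a t)^3 := by
    intro t
    have h4 : HasDerivAt (fun u => deriv b (a u)) (deriv (deriv b) (a t) * deriv a t) t :=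
      ((hdb.differentiable (by simp) (a t)).hasDerivAt).comp t
        ((ha.differentiable (by simp) t).hasDerivAt)
    have h5 : (fun u => deriv b (a u)) = fun u => (deriv a u)⁻¹ := funext h1
    rw [h5] at h4
    have h6 : deriv (deriv b) (a t) * deriv a t = -(deriv (deriv a) t) / (deriv a t)^2 :=
      h4.unique (hinv t)
    field_simp [ha' t] at h6 ⊢
    linear_combination h6
  constructor
  · -- temporal law
    intro t x v k
    dsimp only
    have hd : deriv (fun s => fib a φ s x v k) t
        = (∑ j, Jac φ x k j * v j) * (-(deriv (deriv a) t) / (deriv a t)^2) := by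
      have h : HasDerivAt (fun s => (∑ j, Jac φ x k j * v j) * (deriv a s)⁻¹)
          ((∑ j, Jac φ x k j * v j) * (-(deriv (deriv a) t) / (deriv a t)^2)) t :=
        (hinv t).const_mul _
      exact h.deriv
    have hsum : ∑ j, -H t * v j * dtdT a t ^ 2 * Jac φ x k j
        = -H t * dtdT a t ^ 2 * ∑ j, Jac φ x k j * v j := by
      rw [Finset.mul_sum]
      exact Finset.sum_congr rfl fun j _ => by ring
    have hfib : fib a φ t x v k = (∑ j, Jac φ x k j * v j) * (deriv a t)⁻¹ := rfl
    have hT : dtdT a t = (deriv a t)⁻¹ := rfl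
    rw [hd, hsum, hHrule t, hb'' t, hfib, hT]
    field_simp [ha' t]
    ring
  · -- spatial law
    intro t x v k l
    dsimp only
    have hpdfib : ∀ m, pd (fun y => fib a φ t y v k) x m
        = (∑ j, pd (fun y => Jac φ y k j) x m * v j) * dtdT a t := by
      intro m
      have hdj : ∀ j, DifferentiableAt ℝ (fun y => Jac φ y k j * v j) x := fun j =>
        (((NLC.contDiff_Jac hφ k j).differentiable (by simp)) x).mul_const (v j)
      have hdf : DifferentiableAt ℝ (fun y => ∑ j, Jac φ y k j * v j) x :=
        DifferentiableAt.fun_sum fun j _ => hdj j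
      have hstep : pd (fun y => (∑ j, Jac φ y k j * v j) * dtdT a t) x m
          = (∑ j, pd (fun y => Jac φ y k j) x m * v j) * dtdT a t := by
        rw [NLC.pd_mul_const hdf (dtdT a t) m]
        congr 1
        have hps := NLC.pd_sum (F := fun j y => Jac φ y k j * v j) (x := x) hdj m
        rw [hps]
        exact Finset.sum_congr rfl fun j _ =>
          NLC.pd_mul_const (((NLC.contDiff_Jac hφ k j).differentiable (by simp)) x) (v j) m
      exact hstep
    have key := NLC.spatial_algebra (fun p q => Jac φ x p q) (fun p q => Jac ψ (φ x) p q)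
      (fun i q r => pd (fun z => pd (fun w => ψ w i) z q) (φ x) r)
      (fun m r j => pd (fun y => Jac φ y m j) x r)
      (γ x) (γt (φ x)) v (dtdT a t) k l
      (fun i j => NLC.Jac_inv hφ hψ hψφ x i j)
      (fun i j => NLC.Jac_inv' hφ hψ hψφ hφψ x i j)
      (fun i q r => NLC.pd_pd_symm (NLC.contDiff_proj hψ i) (φ x) q r)
      (fun i j r => NLC.E1 hφ hψ hψφ x i j r)
      (hrule x)
    simp only [hpdfib]
    exact key
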